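/- arXiv:1102.2670 — 2 statements merged into one kernel-verified Lean document; each statement's English description precedes it below -/
import Mathlib

section
/- For every t ≥ 1, Σ_{k=1}^t min( ‖m_{k-1}‖²_{V̄_{k-1}^{-1}}, 1 ) ≤ 2 ( log det(V̄_t) − log det(V) ) ≤ 2 ( d log( (trace(V) + t L²)/d ) − log det(V) ). -/
open Matrix Finset

/-!
The matrix determinant lemma gives `det V̄ₖ₊₁ = det V̄ₖ · (1 + ‖mₖ‖²_{V̄ₖ⁻¹})`, so
`log det V̄ₜ - log det V` telescopes into `∑ₖ log (1 + ‖mₖ‖²_{V̄ₖ⁻¹})`, and `min x 1 ≤ 2 log (1 + x)`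
for `x ≥ 0`. For the second bound, concavity of `log` applied to the eigenvalues of `V̄ₜ` gives
`log det V̄ₜ ≤ d log (trace V̄ₜ / d)`, and `trace V̄ₜ = trace V + ∑ₖ ‖mₖ‖² ≤ trace V + t L²`.
-/

lemma Finset.sum_Icc_one_sub_one {M : Type*} [AddCommMonoid M] (f : ℕ → M) (t : ℕ) :
    ∑ k ∈ Icc 1 t, f (k - 1) = ∑ i ∈ range t, f i :=
  sum_nbij' (· - 1) (· + 1) (by simp; omega) (by simp) (by simp; omega) (by simp) (by simp)

lemma Real.min_le_two_mul_log_one_add {x : ℝ} (hx : 0 ≤ x) : min x 1 ≤ 2 * log (1 + x) := by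
  have : min x 1 ≤ 2 * (2 * x / (x + 2)) := by
    rw [mul_div_assoc', le_div_iff₀ (by linarith)]
    rcases min_cases x 1 with ⟨h, _⟩ | ⟨h, _⟩ <;> rw [h] <;> nlinarith
  linarith [le_log_one_add_of_nonneg hx]

lemma Real.sum_log_le_card_mul_log_sum_div {ι : Type*} (s : Finset ι) {z : ι → ℝ}
    (hz : ∀ i ∈ s, 0 < z i) : ∑ i ∈ s, log (z i) ≤ #s * log ((∑ i ∈ s, z i) / #s) := by
  rcases s.eq_empty_or_nonempty with rfl | hs
  · simp
  have hcard : (0 : ℝ) < #s := by exact_mod_cast hs.card_pos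
  have jensen := strictConcaveOn_log_Ioi.concaveOn.le_map_sum (t := s) (w := fun _ ↦ (#s : ℝ)⁻¹)
    (p := z) (fun _ _ ↦ by positivity) (by simp [hcard.ne']) hz
  simp only [smul_eq_mul, ← div_eq_inv_mul, ← sum_div] at jensen
  rwa [div_le_iff₀ hcard, mul_comm] at jensen

namespace Matrix

section

variable {n : Type*} [Fintype n] [DecidableEq n]

lemma det_add_vecMulVec {R : Type*} [CommRing R] {A : Matrix n n R}
    (hA : IsUnit A.det) (u v : n → R) :
    (A + vecMulVec u v).det = A.det * (1 + v ⬝ᵥ A⁻¹ *ᵥ u) := by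
  rw [vecMulVec_eq Unit, det_add_replicateCol_mul_replicateRow hA]
  congr 1
  rw [det_unique, add_apply, one_apply_eq, Matrix.mul_assoc, ← replicateCol_mulVec,
    replicateRow_mul_replicateCol_apply]

lemma PosDef.dotProduct_inv_mulVec_nonneg {A : Matrix n n ℝ} (hA : A.PosDef)
    (u : n → ℝ) : 0 ≤ u ⬝ᵥ A⁻¹ *ᵥ u := by
  simpa using hA.inv.posSemidef.dotProduct_mulVec_nonneg u

lemma PosDef.log_det_add_vecMulVec_self {A : Matrix n n ℝ} (hA : A.PosDef)
    (u : n → ℝ) :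
    Real.log (A + vecMulVec u u).det = Real.log A.det + Real.log (1 + u ⬝ᵥ A⁻¹ *ᵥ u) := by
  have := hA.dotProduct_inv_mulVec_nonneg u
  rw [det_add_vecMulVec (isUnit_iff_ne_zero.mpr hA.det_pos.ne') u u,
    Real.log_mul hA.det_pos.ne' (by positivity)]

lemma PosDef.log_det_le_card_mul_log_trace_div {A : Matrix n n ℝ}
    (hA : A.PosDef) : Real.log A.det ≤ Fintype.card n * Real.log (A.trace / Fintype.card n) := by
  rw [hA.isHermitian.det_eq_prod_eigenvalues, hA.isHermitian.trace_eq_sum_eigenvalues]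
  simp only [RCLike.ofReal_real_eq_id, id_eq]
  rw [Real.log_prod fun i _ ↦ (hA.eigenvalues_pos i).ne']
  exact Real.sum_log_le_card_mul_log_sum_div _ fun i _ ↦ hA.eigenvalues_pos i

end

variable {n : Type*}

/-- The regularized design matrix `V̄ₜ = V + ∑_{j < t} mⱼ mⱼᵀ`. -/
def designMatrix (V : Matrix n n ℝ) (m : ℕ → n → ℝ) (t : ℕ) : Matrix n n ℝ :=
  V + ∑ j ∈ range t, vecMulVec (m j) (m j)

variable {V : Matrix n n ℝ} {m : ℕ → n → ℝ}

@[simp]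
lemma designMatrix_zero : designMatrix V m 0 = V := by
  simp [designMatrix]

lemma designMatrix_succ (t : ℕ) :
    designMatrix V m (t + 1) = designMatrix V m t + vecMulVec (m t) (m t) := by
  simp [designMatrix, sum_range_succ, add_assoc]

variable [Fintype n]

lemma PosDef.designMatrix (hV : V.PosDef) (t : ℕ) : (designMatrix V m t).PosDef :=
  hV.add_posSemidef <| posSemidef_sum _ fun j _ ↦ by
    simpa using posSemidef_vecMulVec_self_star (m j)

lemma trace_designMatrix_le {L : ℝ} (hm : ∀ k, m k ⬝ᵥ m k ≤ L ^ 2) (t : ℕ) :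
    (designMatrix V m t).trace ≤ V.trace + t * L ^ 2 := by
  have := sum_le_sum fun j (_ : j ∈ range t) ↦ hm j
  simp only [sum_const, card_range, nsmul_eq_mul] at this
  simpa [designMatrix, trace_sum] using this

variable [DecidableEq n]

/-- The elliptical potential lemma. -/
lemma sum_min_le_two_mul_log_det_designMatrix (hV : V.PosDef) (t : ℕ) :
    ∑ k ∈ range t, min (m k ⬝ᵥ (designMatrix V m k)⁻¹ *ᵥ m k) 1
      ≤ 2 * (Real.log (designMatrix V m t).det - Real.log V.det) := by
  induction t with
  | zero => simp
  | succ t ih =>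
    have hV_t := hV.designMatrix (m := m) t
    rw [sum_range_succ, designMatrix_succ, hV_t.log_det_add_vecMulVec_self]
    linarith [Real.min_le_two_mul_log_one_add (hV_t.dotProduct_inv_mulVec_nonneg (m t))]

lemma log_det_designMatrix_le (hV : V.PosDef) {L : ℝ} (hm : ∀ k, m k ⬝ᵥ m k ≤ L ^ 2) (t : ℕ) :
    Real.log (designMatrix V m t).det
      ≤ Fintype.card n * Real.log ((V.trace + t * L ^ 2) / Fintype.card n) := by
  have hV_t := hV.designMatrix (m := m) t
  refine hV_t.log_det_le_card_mul_log_trace_div.trans ?_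
  cases isEmpty_or_nonempty n
  · simp
  gcongr
  exacts [div_pos hV_t.trace_pos (by positivity), trace_designMatrix_le hm t]

end Matrix

theorem stmt6_general {d : ℕ} (V : Matrix (Fin d) (Fin d) ℝ) (hV : V.PosDef)
    (m : ℕ → Fin d → ℝ) (L : ℝ) (hmL : ∀ k, Real.sqrt (m k ⬝ᵥ m k) ≤ L)
    (t : ℕ) :
    (∑ k ∈ Finset.Icc 1 t,
        min (m (k - 1) ⬝ᵥ
          ((V + ∑ j ∈ Finset.Icc 1 (k - 1), vecMulVec (m (j - 1)) (m (j - 1)))⁻¹ *ᵥ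
            m (k - 1))) 1)
      ≤ 2 * (Real.log (V + ∑ k ∈ Finset.Icc 1 t,
              vecMulVec (m (k - 1)) (m (k - 1))).det - Real.log V.det) ∧
    2 * (Real.log (V + ∑ k ∈ Finset.Icc 1 t,
            vecMulVec (m (k - 1)) (m (k - 1))).det - Real.log V.det)
      ≤ 2 * ((d : ℝ) * Real.log ((V.trace + t * L ^ 2) / d) - Real.log V.det) := by
  have hgram (s : ℕ) :
      V + ∑ j ∈ Icc 1 s, vecMulVec (m (j - 1)) (m (j - 1)) = designMatrix V m s := by
    rw [designMatrix, sum_Icc_one_sub_one (fun j ↦ vecMulVec (m j) (m j))]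
  have hm (k : ℕ) : m k ⬝ᵥ m k ≤ L ^ 2 := (Real.sqrt_le_iff.mp (hmL k)).2
  simp_rw [hgram]
  rw [sum_Icc_one_sub_one (fun k ↦ min (m k ⬝ᵥ (designMatrix V m k)⁻¹ *ᵥ m k) 1)]
  refine ⟨sum_min_le_two_mul_log_det_designMatrix hV t, ?_⟩
  have := log_det_designMatrix_le hV hm t
  simp only [Fintype.card_fin] at this
  linarith

/-- `∑_{k=1}^t min(‖m_{k-1}‖²_{V̄_{k-1}⁻¹}, 1) ≤ 2(log det(V̄_t) - log det(V))
      ≤ 2(d log((trace V + t L²)/d) - log det V)`. -/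
theorem stmt6 {d : ℕ} (V : Matrix (Fin d) (Fin d) ℝ) (hV : V.PosDef)
    (m : ℕ → Fin d → ℝ) (L : ℝ) (hmL : ∀ k, Real.sqrt (m k ⬝ᵥ m k) ≤ L)
    (t : ℕ) (ht : 1 ≤ t) :
    (∑ k ∈ Finset.Icc 1 t,
        min (m (k - 1) ⬝ᵥ
          ((V + ∑ j ∈ Finset.Icc 1 (k - 1), vecMulVec (m (j - 1)) (m (j - 1)))⁻¹ *ᵥ
            m (k - 1))) 1)
      ≤ 2 * (Real.log (V + ∑ k ∈ Finset.Icc 1 t,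
              vecMulVec (m (k - 1)) (m (k - 1))).det - Real.log V.det) ∧
    2 * (Real.log (V + ∑ k ∈ Finset.Icc 1 t,
            vecMulVec (m (k - 1)) (m (k - 1))).det - Real.log V.det)
      ≤ 2 * ((d : ℝ) * Real.log ((V.trace + t * L ^ 2) / d) - Real.log V.det) :=
  stmt6_general V hV m L hmL t
end

section
/- Let B be a positive definite d×d matrix, C a positive semidefinite d×d matrix, and A = B + C. Then for every x ≠ 0, (xᵀ A x) / (xᵀ B x) ≤ det(A) / det(B). -/
/-!
Conjugating by `B^{-1/2}` reduces the claim to `B = 1`, i.e. to `A ≥ 1` in the Loewner order.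
Then every eigenvalue of `A` is at least `1`, so each one is bounded by their product `det A`,
whence `A ≤ det A • 1`.
-/

open Matrix
open scoped MatrixOrder

namespace Matrix

variable {n : Type*} [Fintype n] [DecidableEq n]

theorem le_det_smul_one_of_one_le {M : Matrix n n ℝ} (hM : 1 ≤ M) :
    M ≤ M.det • (1 : Matrix n n ℝ) := by
  have hH : M.IsHermitian := by simpa using (le_iff.mp hM).isHermitian.add isHermitian_one
  have hge : ∀ i, 1 ≤ hH.eigenvalues i := by
    have := (algebraMap_le_iff_le_spectrum (r := (1 : ℝ)) (a := M)).mp (by simpa using hM)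
    intro i; exact this _ (hH.spectrum_real_eq_range_eigenvalues ▸ ⟨i, rfl⟩)
  rw [← Algebra.algebraMap_eq_smul_one, le_algebraMap_iff_spectrum_le,
    hH.spectrum_real_eq_range_eigenvalues, hH.det_eq_prod_eigenvalues]
  rintro _ ⟨i, rfl⟩
  simpa using Finset.prod_le_prod_of_subset_of_one_le (Finset.subset_univ {i})
    (fun j _ => zero_le_one.trans (hge j)) (fun j _ _ => hge j)

theorem PosDef.le_det_div_det_smul_of_le {A B : Matrix n n ℝ} (hB : B.PosDef)
    (hBA : B ≤ A) : A ≤ (A.det / B.det) • B := by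
  set S := CFC.sqrt B
  have hSS : S * S = B := CFC.sqrt_mul_sqrt_self B hB.posSemidef.nonneg
  have hS : star S = S := (CFC.sqrt_nonneg B).isSelfAdjoint.star_eq
  have hdetS : S.det * S.det = B.det := by rw [← det_mul, hSS]
  have hSu : IsUnit S.det := isUnit_iff_ne_zero.mpr fun h =>
    hB.det_pos.ne' (by rw [← hdetS, h, zero_mul])
  have hSinv : star S⁻¹ = S⁻¹ := by
    rw [star_eq_conjTranspose, conjTranspose_nonsing_inv, ← star_eq_conjTranspose, hS]
  have hinv : S⁻¹ * S = 1 := nonsing_inv_mul S hSu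
  have hinv' : S * S⁻¹ = 1 := mul_nonsing_inv S hSu
  have hone : 1 ≤ S⁻¹ * A * S⁻¹ := by
    have hBS : S⁻¹ * B * S⁻¹ = 1 := by rw [← hSS, ← mul_assoc, hinv, one_mul, hinv']
    simpa only [hSinv, hBS] using star_left_conjugate_le_conjugate hBA S⁻¹
  have hdet : (S⁻¹ * A * S⁻¹).det = A.det / B.det := by
    rw [det_mul, det_mul, det_nonsing_inv, Ring.inverse_eq_inv', ← hdetS]
    field_simp
  have hAS : S * (S⁻¹ * A * S⁻¹) * S = A := by
    rw [← mul_assoc, ← mul_assoc, hinv', one_mul, mul_assoc, hinv, mul_one]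
  have hcS : S * ((A.det / B.det) • 1) * S = (A.det / B.det) • B := by
    rw [mul_smul_comm, mul_one, smul_mul_assoc, hSS]
  simpa only [hS, hdet, hAS, hcS] using
    star_left_conjugate_le_conjugate (le_det_smul_one_of_one_le hone) S

end Matrix

/-- If `B` is positive definite, `C` is positive semidefinite and `A = B + C`, then for
every `x ≠ 0`, `(xᵀ A x)/(xᵀ B x) ≤ det(A)/det(B)`. -/
theorem stmt17 {d : ℕ} (A B C : Matrix (Fin d) (Fin d) ℝ)
    (hB : B.PosDef) (hC : C.PosSemidef) (hA : A = B + C)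
    (x : Fin d → ℝ) (hx : x ≠ 0) :
    (x ⬝ᵥ (A *ᵥ x)) / (x ⬝ᵥ (B *ᵥ x)) ≤ A.det / B.det := by
  have hBA : B ≤ A := hA ▸ le_add_of_nonneg_right hC.nonneg
  have hxBx : 0 < x ⬝ᵥ (B *ᵥ x) := by simpa using hB.re_dotProduct_pos hx
  have hquad := (le_iff.mp (hB.le_det_div_det_smul_of_le hBA)).dotProduct_mulVec_nonneg x
  rw [div_le_iff₀ hxBx]
  simpa [sub_mulVec, smul_mulVec, dotProduct_sub] using hquad
end
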